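/- Let A, B be K-algebras with bases {e_i}_{i∈Λ}, {u_i}_{i∈Λ} (Λ possibly infinite), structure constants γ_{ij}^k, τ_{lm}^n, and suppose f: A → B is a K-algebra isomorphism with f(e_i) = Σ_j t_i^j u_j and f⁻¹(u_i) = Σ_j s_i^j e_j. Then the set of zeros in K of the ideal I_K^f of K[X] generated by the polynomials p_{ijn} = Σ_{k∈Σ_{ij}} γ_{ij}^k T_k^n − Σ_{l∈Λ_i^f, m∈Λ_j^f} τ_{lm}^n T_i^l T_j^m, q_{ik} = Σ_{j∈Λ_i^f} T_i^j S_j^k − δ_{ik}, r_{ik} = Σ_{j∈Λ_i^{f⁻¹}} S_i^j T_j^k − δ_{ik}, together with the indeterminates T_i^j for j ∉ Λ_i^f and S_i^j for j ∉ Λ_i^{f⁻¹}, is in bijection with the set Isom_f(A,B) of K-algebra isomorphisms g: A → B whose matrix entries (and those of g⁻¹) vanish wherever those of f (resp. f⁻¹) vanish. -/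

import Mathlib

open MvPolynomial

variable (K : Type u) [Field K] (Λ : Type v) [DecidableEq Λ] (A B : Type w)
  [NonUnitalNonAssocRing A] [Module K A] [SMulCommClass K A A] [IsScalarTower K A A]
  [NonUnitalNonAssocRing B] [Module K B] [SMulCommClass K B B] [IsScalarTower K B B]

/-- The polynomial `p_{ijn} = Σ_{k ∈ Σ_{ij}} γ_{ij}^k T_k^n −
Σ_{l ∈ Λ_i^f, m ∈ Λ_j^f} τ_{lm}^n T_i^l T_j^m`, where `t_i^j = (bB.repr (f (bA i))) j`,
`γ_{ij}^k = (bA.repr (bA i * bA j)) k`, `τ_{lm}^n = (bB.repr (bB l * bB m)) n`, the variable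
`T_i^j` is `X (Sum.inl (i,j))` and `S_i^j` is `X (Sum.inr (i,j))`; the index sets
`Σ_{ij}`, `Λ_i^f` are the (finite) supports of the relevant coordinate functions. -/
noncomputable def pPolyInf (bA : Module.Basis Λ K A) (bB : Module.Basis Λ K B) (f : A ≃ₗ[K] B) (i j n : Λ) :
    MvPolynomial ((Λ × Λ) ⊕ (Λ × Λ)) K :=
  (∑ k ∈ (bA.repr (bA i * bA j)).support,
      C (bA.repr (bA i * bA j) k) * X (Sum.inl (k, n))) -
    ∑ l ∈ (bB.repr (f (bA i))).support, ∑ m ∈ (bB.repr (f (bA j))).support,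
      C (bB.repr (bB l * bB m) n) * X (Sum.inl (i, l)) * X (Sum.inl (j, m))

/-- The polynomial `q_{ik} = Σ_{j ∈ Λ_i^f} T_i^j S_j^k − δ_{ik}`. -/
noncomputable def qPolyInf (bA : Module.Basis Λ K A) (bB : Module.Basis Λ K B) (f : A ≃ₗ[K] B) (i k : Λ) :
    MvPolynomial ((Λ × Λ) ⊕ (Λ × Λ)) K :=
  (∑ j ∈ (bB.repr (f (bA i))).support, X (Sum.inl (i, j)) * X (Sum.inr (j, k))) -
    C (if i = k then 1 else 0)

/-- The polynomial `r_{ik} = Σ_{j ∈ Λ_i^{f⁻¹}} S_i^j T_j^k − δ_{ik}`, where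
`s_i^j = (bA.repr (f.symm (bB i))) j`. -/
noncomputable def rPolyInf (bA : Module.Basis Λ K A) (bB : Module.Basis Λ K B) (f : A ≃ₗ[K] B) (i k : Λ) :
    MvPolynomial ((Λ × Λ) ⊕ (Λ × Λ)) K :=
  (∑ j ∈ (bA.repr (f.symm (bB i))).support, X (Sum.inr (i, j)) * X (Sum.inl (j, k))) -
    C (if i = k then 1 else 0)

/-- The ideal `I_K^f` generated by all the `p_{ijn}`, `q_{ik}`, `r_{ik}`, together with the
indeterminates `T_i^j` for `j ∉ Λ_i^f` and `S_i^j` for `j ∉ Λ_i^{f⁻¹}`. -/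
noncomputable def isoIdealInf (bA : Module.Basis Λ K A) (bB : Module.Basis Λ K B) (f : A ≃ₗ[K] B) :
    Ideal (MvPolynomial ((Λ × Λ) ⊕ (Λ × Λ)) K) :=
  Ideal.span
    ((Set.range fun x : Λ × Λ × Λ => pPolyInf K Λ A B bA bB f x.1 x.2.1 x.2.2) ∪
     (Set.range fun x : Λ × Λ => qPolyInf K Λ A B bA bB f x.1 x.2) ∪
     (Set.range fun x : Λ × Λ => rPolyInf K Λ A B bA bB f x.1 x.2) ∪
     {w | ∃ i j, bB.repr (f (bA i)) j = 0 ∧ w = X (Sum.inl (i, j))} ∪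
     {w | ∃ i j, bA.repr (f.symm (bB i)) j = 0 ∧ w = X (Sum.inr (i, j))})


/-!
A point `a` of `K^X` whose coordinates `T_i^j`, `S_i^j` vanish off the supports of the matrices
of `f` and `f⁻¹` is the pair of matrices of linear maps `g : A → B` and `h : B → A`. At such a
point `q_{ik}` and `r_{ik}` are the entries of `h ∘ g - id` and `g ∘ h - id`, and `p_{ijn}` is the
`n`-th coordinate of `g (e_i e_j) - g e_i * g e_j`. Hence `a` is a zero of `I_K^f` exactly when
`g` is a multiplicative isomorphism with inverse `h`, and since a linear map is determined by its
matrix, `g ↦ (matrix of g, matrix of g⁻¹)` is the required bijection.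
-/

namespace Module.Basis

variable {R M N ι κ : Type*} [CommSemiring R] [AddCommMonoid M] [Module R M]
  [AddCommMonoid N] [Module R N] (b : Basis ι R M) (c : Basis κ R N)

theorem sum_repr_smul_of_forall_notMem {s : Finset ι} {v : M} (h : ∀ i ∉ s, b.repr v i = 0) :
    ∑ i ∈ s, b.repr v i • b i = v := by
  conv_rhs => rw [← b.linearCombination_repr v]
  exact (Finsupp.linearCombination_apply_of_mem_supported R
    ((Finsupp.mem_supported' R _).2 h)).symm

theorem repr_map_apply_of_forall_notMem (g : M →ₗ[R] N) {s : Finset ι} {v : M}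
    (h : ∀ i ∉ s, b.repr v i = 0) (k : κ) :
    c.repr (g v) k = ∑ i ∈ s, b.repr v i * c.repr (g (b i)) k := by
  conv_lhs => rw [← b.sum_repr_smul_of_forall_notMem h]
  simp only [map_sum, map_smul, Finsupp.coe_finsetSum, Finset.sum_apply, Finsupp.coe_smul,
    Pi.smul_apply, smul_eq_mul]

theorem repr_sum_smul_apply {s : Finset ι} {a : ι → R} (h : ∀ i ∉ s, a i = 0) (i : ι) :
    b.repr (∑ j ∈ s, a j • b j) i = a i := by
  classical
  simp only [map_sum, map_smul, repr_self, Finsupp.coe_finsetSum, Finset.sum_apply,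
    Finsupp.coe_smul, Pi.smul_apply, Finsupp.single_apply, smul_eq_mul, mul_ite, mul_one,
    mul_zero, Finset.sum_ite_eq', ite_eq_left_iff]
  exact fun hi => (h i hi).symm

theorem linearMap_eq_id_iff [DecidableEq ι] (φ : M →ₗ[R] M) :
    φ = LinearMap.id ↔ ∀ i k, b.repr (φ (b i)) k = if i = k then 1 else 0 := by
  constructor
  · rintro rfl i k
    simp [Finsupp.single_apply]
  · intro h
    exact b.ext fun i => b.ext_elem_iff.2 fun k => by simp [h, Finsupp.single_apply]

noncomputable def constrOfRows (s : ι → Finset κ) (a : ι → κ → R) : M →ₗ[R] N :=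
  b.constr R fun i => ∑ j ∈ s i, a i j • c j

theorem repr_constrOfRows_apply {s : ι → Finset κ} {a : ι → κ → R}
    (h : ∀ i, ∀ j ∉ s i, a i j = 0) (i : ι) (j : κ) :
    c.repr (b.constrOfRows c s a (b i)) j = a i j := by
  rw [constrOfRows, constr_basis, c.repr_sum_smul_apply (h i)]

/-- The point with coordinates `T_i^j` the matrix entries of `g` and `S_i^j` those of `h`. -/
noncomputable def matrixCoords (g : M →ₗ[R] N) (h : N →ₗ[R] M) : (ι × κ) ⊕ (κ × ι) → R :=
  Sum.elim (fun p => c.repr (g (b p.1)) p.2) (fun p => b.repr (h (c p.1)) p.2)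

theorem matrixCoords_constrOfRows {s : ι → Finset κ} {t : κ → Finset ι}
    {a : (ι × κ) ⊕ (κ × ι) → R} (hs : ∀ i, ∀ j ∉ s i, a (.inl (i, j)) = 0)
    (ht : ∀ i, ∀ j ∉ t i, a (.inr (i, j)) = 0) :
    b.matrixCoords c (b.constrOfRows c s fun i j => a (.inl (i, j)))
      (c.constrOfRows b t fun i j => a (.inr (i, j))) = a := by
  funext p
  rcases p with ⟨i, j⟩ | ⟨i, j⟩
  · exact b.repr_constrOfRows_apply c hs i j
  · exact c.repr_constrOfRows_apply b ht i j

section Mul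

variable {A C : Type*} [NonUnitalNonAssocSemiring A] [Module R A] [SMulCommClass R A A]
  [IsScalarTower R A A] [NonUnitalNonAssocSemiring C] [Module R C] [SMulCommClass R C C]
  [IsScalarTower R C C]

theorem repr_mul_apply_of_forall_notMem (b : Basis ι R A) {s t : Finset ι} {x y : A}
    (hx : ∀ i ∉ s, b.repr x i = 0) (hy : ∀ i ∉ t, b.repr y i = 0) (n : ι) :
    b.repr (x * y) n = ∑ l ∈ s, ∑ m ∈ t, b.repr x l * b.repr y m * b.repr (b l * b m) n := by
  conv_lhs => rw [← b.sum_repr_smul_of_forall_notMem hx, ← b.sum_repr_smul_of_forall_notMem hy]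
  simp only [Finset.sum_mul_sum, smul_mul_smul_comm, map_sum, map_smul, Finsupp.coe_finsetSum,
    Finset.sum_apply, Finsupp.coe_smul, Pi.smul_apply, smul_eq_mul]

theorem _root_.LinearMap.map_mul_of_map_mul_basis (b : Basis ι R A) (g : A →ₗ[R] C)
    (h : ∀ i j, g (b i * b j) = g (b i) * g (b j)) (x y : A) : g (x * y) = g x * g y :=
  LinearMap.congr_fun₂ (LinearMap.ext_basis b b (B := (LinearMap.mul R A).compr₂ g)
    (B' := (LinearMap.mul R C).compl₁₂ g g) (by simpa using h)) x y

end Mul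

end Module.Basis

section IsoIdeal

open Module.Basis

-- These shadow the variables above, so that each lemma assumes only the instances it uses.
variable {K Λ : Type*} {A B : Type w} [Field K] [NonUnitalNonAssocRing A] [Module K A]
  [NonUnitalNonAssocRing B] [Module K B] {bA : Module.Basis Λ K A} {bB : Module.Basis Λ K B}
  {f : A ≃ₗ[K] B} {g : A →ₗ[K] B} {h : B →ₗ[K] A}

theorem eval_pPolyInf_matrixCoords [SMulCommClass K B B] [IsScalarTower K B B]
    (hg : ∀ i j, bB.repr (f (bA i)) j = 0 → bB.repr (g (bA i)) j = 0) (i j n : Λ) :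
    eval (bA.matrixCoords bB g h) (pPolyInf K Λ A B bA bB f i j n) =
      bB.repr (g (bA i * bA j)) n - bB.repr (g (bA i) * g (bA j)) n := by
  have hsupp : ∀ i, ∀ l ∉ (bB.repr (f (bA i))).support, bB.repr (g (bA i)) l = 0 :=
    fun i l hl => hg i l (Finsupp.notMem_support_iff.mp hl)
  rw [bA.repr_map_apply_of_forall_notMem bB g (fun k hk => Finsupp.notMem_support_iff.mp hk),
    bB.repr_mul_apply_of_forall_notMem (hsupp i) (hsupp j)]
  simp only [pPolyInf, map_sub, map_sum, map_mul, eval_C, eval_X, matrixCoords, Sum.elim_inl]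
  congr 1
  exact Finset.sum_congr rfl fun _ _ => Finset.sum_congr rfl fun _ _ => by ring

theorem forall_eval_pPolyInf_matrixCoords_eq_zero_iff [SMulCommClass K A A] [IsScalarTower K A A]
    [SMulCommClass K B B] [IsScalarTower K B B]
    (hg : ∀ i j, bB.repr (f (bA i)) j = 0 → bB.repr (g (bA i)) j = 0) :
    (∀ i j n, eval (bA.matrixCoords bB g h) (pPolyInf K Λ A B bA bB f i j n) = 0) ↔
      ∀ x y, g (x * y) = g x * g y := by
  simp only [eval_pPolyInf_matrixCoords hg, sub_eq_zero]
  exact ⟨fun H => g.map_mul_of_map_mul_basis bA fun i j => bB.ext_elem_iff.2 (H i j),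
    fun H i j n => by rw [H]⟩

variable [DecidableEq Λ]

theorem forall_eval_isoIdealInf_eq_zero_iff {a : (Λ × Λ) ⊕ (Λ × Λ) → K} :
    (∀ p ∈ isoIdealInf K Λ A B bA bB f, eval a p = 0) ↔
      (∀ i j n, eval a (pPolyInf K Λ A B bA bB f i j n) = 0) ∧
      (∀ i k, eval a (qPolyInf K Λ A B bA bB f i k) = 0) ∧
      (∀ i k, eval a (rPolyInf K Λ A B bA bB f i k) = 0) ∧
      (∀ i j, bB.repr (f (bA i)) j = 0 → a (.inl (i, j)) = 0) ∧
      (∀ i j, bA.repr (f.symm (bB i)) j = 0 → a (.inr (i, j)) = 0) := by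
  have hker : (∀ p ∈ isoIdealInf K Λ A B bA bB f, eval a p = 0) ↔
      isoIdealInf K Λ A B bA bB f ≤ RingHom.ker (eval a) := Iff.rfl
  rw [hker, isoIdealInf, Ideal.span_le]
  simp only [Set.union_subset_iff, Set.range_subset_iff, SetLike.mem_coe, RingHom.mem_ker,
    Prod.forall, and_assoc, Set.ofPred_subset, forall_exists_index, and_imp]
  refine and_congr_right' <| and_congr_right' <| and_congr_right' <| and_congr ?_ ?_ <;>
  exact ⟨fun h i j hij => by simpa using h _ i j hij rfl,
    fun h _ i j hij hx => by simpa [hx] using h i j hij⟩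

theorem eval_qPolyInf_matrixCoords
    (hg : ∀ i j, bB.repr (f (bA i)) j = 0 → bB.repr (g (bA i)) j = 0) (i k : Λ) :
    eval (bA.matrixCoords bB g h) (qPolyInf K Λ A B bA bB f i k) =
      bA.repr (h (g (bA i))) k - if i = k then 1 else 0 := by
  rw [bB.repr_map_apply_of_forall_notMem bA h
    fun j hj => hg i j (Finsupp.notMem_support_iff.mp hj)]
  simp [qPolyInf, matrixCoords]

theorem eval_rPolyInf_matrixCoords
    (hh : ∀ i j, bA.repr (f.symm (bB i)) j = 0 → bA.repr (h (bB i)) j = 0) (i k : Λ) :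
    eval (bA.matrixCoords bB g h) (rPolyInf K Λ A B bA bB f i k) =
      bB.repr (g (h (bB i))) k - if i = k then 1 else 0 := by
  rw [bA.repr_map_apply_of_forall_notMem bB g
    fun j hj => hh i j (Finsupp.notMem_support_iff.mp hj)]
  simp [rPolyInf, matrixCoords]

theorem forall_eval_qPolyInf_matrixCoords_eq_zero_iff
    (hg : ∀ i j, bB.repr (f (bA i)) j = 0 → bB.repr (g (bA i)) j = 0) :
    (∀ i k, eval (bA.matrixCoords bB g h) (qPolyInf K Λ A B bA bB f i k) = 0) ↔
      h ∘ₗ g = LinearMap.id := by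
  simp only [bA.linearMap_eq_id_iff, eval_qPolyInf_matrixCoords hg, sub_eq_zero,
    LinearMap.comp_apply]

theorem forall_eval_rPolyInf_matrixCoords_eq_zero_iff
    (hh : ∀ i j, bA.repr (f.symm (bB i)) j = 0 → bA.repr (h (bB i)) j = 0) :
    (∀ i k, eval (bA.matrixCoords bB g h) (rPolyInf K Λ A B bA bB f i k) = 0) ↔
      g ∘ₗ h = LinearMap.id := by
  simp only [bB.linearMap_eq_id_iff, eval_rPolyInf_matrixCoords hh, sub_eq_zero,
    LinearMap.comp_apply]

variable [SMulCommClass K A A] [IsScalarTower K A A] [SMulCommClass K B B] [IsScalarTower K B B]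

theorem forall_eval_isoIdealInf_matrixCoords_eq_zero_iff
    (hg : ∀ i j, bB.repr (f (bA i)) j = 0 → bB.repr (g (bA i)) j = 0)
    (hh : ∀ i j, bA.repr (f.symm (bB i)) j = 0 → bA.repr (h (bB i)) j = 0) :
    (∀ p ∈ isoIdealInf K Λ A B bA bB f, eval (bA.matrixCoords bB g h) p = 0) ↔
      (∀ x y, g (x * y) = g x * g y) ∧ h ∘ₗ g = LinearMap.id ∧ g ∘ₗ h = LinearMap.id := by
  rw [forall_eval_isoIdealInf_eq_zero_iff, forall_eval_pPolyInf_matrixCoords_eq_zero_iff hg,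
    forall_eval_qPolyInf_matrixCoords_eq_zero_iff hg,
    forall_eval_rPolyInf_matrixCoords_eq_zero_iff hh]
  simp only [matrixCoords, Sum.elim_inl, Sum.elim_inr]
  tauto

theorem exists_linearEquiv_matrixCoords_eq {a : (Λ × Λ) ⊕ (Λ × Λ) → K}
    (ha : ∀ p ∈ isoIdealInf K Λ A B bA bB f, eval a p = 0) :
    ∃ e : A ≃ₗ[K] B, (∀ x y, e (x * y) = e x * e y) ∧
      (∀ i j, bB.repr (f (bA i)) j = 0 → bB.repr (e (bA i)) j = 0) ∧
      (∀ i j, bA.repr (f.symm (bB i)) j = 0 → bA.repr (e.symm (bB i)) j = 0) ∧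
      bA.matrixCoords bB e e.symm = a := by
  obtain ⟨-, -, -, hT, hS⟩ := forall_eval_isoIdealInf_eq_zero_iff.1 ha
  have hs : ∀ i, ∀ j ∉ (bB.repr (f (bA i))).support, a (.inl (i, j)) = 0 :=
    fun i j hj => hT i j (Finsupp.notMem_support_iff.mp hj)
  have ht : ∀ i, ∀ j ∉ (bA.repr (f.symm (bB i))).support, a (.inr (i, j)) = 0 :=
    fun i j hj => hS i j (Finsupp.notMem_support_iff.mp hj)
  set g := bA.constrOfRows bB (fun i => (bB.repr (f (bA i))).support) fun i j => a (.inl (i, j))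
  set h := bB.constrOfRows bA (fun i => (bA.repr (f.symm (bB i))).support)
    fun i j => a (.inr (i, j))
  have hga : bA.matrixCoords bB g h = a := matrixCoords_constrOfRows bA bB hs ht
  have hg : ∀ i j, bB.repr (f (bA i)) j = 0 → bB.repr (g (bA i)) j = 0 :=
    fun i j hij => (bA.repr_constrOfRows_apply bB hs i j).trans (hT i j hij)
  have hh : ∀ i j, bA.repr (f.symm (bB i)) j = 0 → bA.repr (h (bB i)) j = 0 :=
    fun i j hij => (bB.repr_constrOfRows_apply bA ht i j).trans (hS i j hij)
  rw [← hga, forall_eval_isoIdealInf_matrixCoords_eq_zero_iff hg hh] at ha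
  obtain ⟨hmul, hhg, hgh⟩ := ha
  exact ⟨.ofLinearMap g h hgh hhg, hmul, hg, hh, hga⟩

end IsoIdeal

theorem stmt19 (bA : Module.Basis Λ K A) (bB : Module.Basis Λ K B) (f : A ≃ₗ[K] B) :
    Nonempty
      ({a : ((Λ × Λ) ⊕ (Λ × Λ)) → K //
          ∀ p ∈ isoIdealInf K Λ A B bA bB f, eval a p = 0} ≃
        {g : A ≃ₗ[K] B //
          (∀ x y, g (x * y) = g x * g y) ∧
          (∀ i j, bB.repr (f (bA i)) j = 0 → bB.repr (g (bA i)) j = 0) ∧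
          (∀ i j, bA.repr (f.symm (bB i)) j = 0 → bA.repr (g.symm (bB i)) j = 0)}) := by
  let toCoords : {g : A ≃ₗ[K] B //
        (∀ x y, g (x * y) = g x * g y) ∧
        (∀ i j, bB.repr (f (bA i)) j = 0 → bB.repr (g (bA i)) j = 0) ∧
        (∀ i j, bA.repr (f.symm (bB i)) j = 0 → bA.repr (g.symm (bB i)) j = 0)} →
      {a : ((Λ × Λ) ⊕ (Λ × Λ)) → K // ∀ p ∈ isoIdealInf K Λ A B bA bB f, eval a p = 0} :=
    fun g => ⟨bA.matrixCoords bB g.1 g.1.symm,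
      (forall_eval_isoIdealInf_matrixCoords_eq_zero_iff g.2.2.1 g.2.2.2).2
        ⟨g.2.1, by ext; simp, by ext; simp⟩⟩
  have hinj : Function.Injective toCoords := fun g g' hgg' =>
    Subtype.ext <| LinearEquiv.toLinearMap_injective <| bA.ext fun i =>
      bB.ext_elem_iff.2 fun j => congr_fun (congrArg Subtype.val hgg') (.inl (i, j))
  have hsurj : Function.Surjective toCoords := by
    rintro ⟨a, ha⟩
    obtain ⟨e, hmul, he, he_symm, rfl⟩ := exists_linearEquiv_matrixCoords_eq ha
    exact ⟨⟨e, hmul, he, he_symm⟩, rfl⟩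
  exact ⟨(Equiv.ofBijective toCoords ⟨hinj, hsurj⟩).symm⟩
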